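/- If c is not bland, then there exist w and a such that Tap(w,a,c) and for all u, b with Tap(u,b,c) one has rank(a) ≤ rank(b); moreover in that case rank(a) + 1 = rank(c), where rank(x) is the ordinal position of the ∈-least wevel at which x is found. -/

import Mathlib

/-- `x` is a subset of `r` (with respect to the membership relation `mem`). -/
def wsSub {M : Type*} (mem : M → M → Prop) (x r : M) : Prop :=
  ∀ y, mem y x → mem y r

/-- `x` is found at `r`:  either `x` is bland and `x ⊆ r`, or some wand-tap of a member
of `r` yields `x`. -/
def wsFoundAt {M : Type*} (Bland : M → Prop) (mem : M → M → Prop)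
    (Tap : M → M → M → Prop) (x r : M) : Prop :=
  (Bland x ∧ wsSub mem x r) ∨ ∃ w b, mem b r ∧ Tap w b x

/-- `x ⧏∈ a`: there is `r ∈ a` with `x` found at `r`. -/
def wsFoundIn {M : Type*} (Bland : M → Prop) (mem : M → M → Prop)
    (Tap : M → M → M → Prop) (x a : M) : Prop :=
  ∃ r, wsFoundAt Bland mem Tap x r ∧ mem r a

/-- `p` is (a) `cpot a`: a bland set whose members are exactly those `x` with `x ⧏∈ a`. -/
def wsIsCpot {M : Type*} (Bland : M → Prop) (mem : M → M → Prop)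
    (Tap : M → M → M → Prop) (a p : M) : Prop :=
  Bland p ∧ ∀ x, mem x p ↔ wsFoundIn Bland mem Tap x a

/-- `i` is the (bland) intersection of `a` and `h`. -/
def wsIsInter {M : Type*} (Bland : M → Prop) (mem : M → M → Prop) (a h i : M) : Prop :=
  Bland i ∧ ∀ x, mem x i ↔ (mem x a ∧ mem x h)

/-- `h` is a wistory: bland, and every `a ∈ h` equals `cpot (a ∩ h)`. -/
def wsWistory {M : Type*} (Bland : M → Prop) (mem : M → M → Prop)
    (Tap : M → M → M → Prop) (h : M) : Prop :=
  Bland h ∧ ∀ a, mem a h → ∃ i, wsIsInter Bland mem a h i ∧ wsIsCpot Bland mem Tap i a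

/-- `s` is a wevel: `s = cpot h` for some wistory `h`. -/
def wsWevel {M : Type*} (Bland : M → Prop) (mem : M → M → Prop)
    (Tap : M → M → M → Prop) (s : M) : Prop :=
  ∃ h, wsWistory Bland mem Tap h ∧ wsIsCpot Bland mem Tap h s

/-- `p` is wand-potent: closed under `⧏∈`. -/
def wsWandPotent {M : Type*} (Bland : M → Prop) (mem : M → M → Prop)
    (Tap : M → M → M → Prop) (p : M) : Prop :=
  ∀ x, wsFoundIn Bland mem Tap x p → mem x p

/-- `a` is wand-transitive: every member of `a` is found at `a`. -/
def wsWandTransitive {M : Type*} (Bland : M → Prop) (mem : M → M → Prop)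
    (Tap : M → M → M → Prop) (a : M) : Prop :=
  ∀ x, mem x a → wsFoundAt Bland mem Tap x a

/-- `s` is `wev a`: the `∈`-least wevel at which `a` is found. -/
def wsIsWevOf {M : Type*} (Bland : M → Prop) (mem : M → M → Prop)
    (Tap : M → M → M → Prop) (a s : M) : Prop :=
  wsWevel Bland mem Tap s ∧ wsFoundAt Bland mem Tap a s ∧
    ∀ r, wsWevel Bland mem Tap r → wsFoundAt Bland mem Tap a r → ¬ mem r s

/-!
Wevels behave like ordinals. Using trichotomy, irreflexivity and the fact that a bland member of a
wevel is a subset of it, `r ∈ s ↔ ¬ s ⊆ r` for wevels. By `∈`-induction every wevel `s` is `cpot`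
of the set `G` of wevels below it: `G` is a wistory by the induction hypothesis, so `cpot G ⊆ s` is
a wevel, and it cannot lie in `s` since it would then be found at itself. Hence every member `x`
of a wevel `s` is found at a wevel in `s`, and `wev x ∈ s`.

For non-bland `c`, pick a tap `Tap(w,a,c)` with `wev a` `∈`-minimal. The wevel `wev c` finds `c`
through a tap of some `b ∈ wev c`, so `wev a ⊆ wev b ∈ wev c`; and a wevel `r ∋ wev a` contains
`a`, so `c` is found at `r`, and `r ∉ wev c` by minimality of `wev c`.
-/

def wsWevelsTrichotomous {M : Type*} (Bland : M → Prop) (mem : M → M → Prop)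
    (Tap : M → M → M → Prop) : Prop :=
  ∀ r s, wsWevel Bland mem Tap r → wsWevel Bland mem Tap s → mem r s ∨ r = s ∨ mem s r

def wsWevelsWellFounded {M : Type*} (Bland : M → Prop) (mem : M → M → Prop)
    (Tap : M → M → M → Prop) : Prop :=
  ∀ φ : M → Prop, (∃ s, wsWevel Bland mem Tap s ∧ φ s) →
    ∃ s, wsWevel Bland mem Tap s ∧ φ s ∧ ∀ r, wsWevel Bland mem Tap r → mem r s → ¬ φ r

def wsFoundAtWevelIn {M : Type*} (Bland : M → Prop) (mem : M → M → Prop)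
    (Tap : M → M → M → Prop) (x s : M) : Prop :=
  ∃ r, wsWevel Bland mem Tap r ∧ mem r s ∧ wsFoundAt Bland mem Tap x r

section Wevels

variable {M : Type*} {Bland Wand : M → Prop} {mem : M → M → Prop} {Tap : M → M → M → Prop}

theorem wsSub.trans {x y z : M} (hxy : wsSub mem x y) (hyz : wsSub mem y z) : wsSub mem x z :=
  fun u hu => hyz u (hxy u hu)

theorem wsFoundAt.mono {x r t : M} (h : wsFoundAt Bland mem Tap x r) (hrt : wsSub mem r t) :
    wsFoundAt Bland mem Tap x t := by
  rcases h with ⟨hx, hxr⟩ | ⟨w, b, hbr, htap⟩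
  · exact Or.inl ⟨hx, hxr.trans hrt⟩
  · exact Or.inr ⟨w, b, hrt b hbr, htap⟩

theorem wsFoundAt.exists_tap {x r : M} (h : wsFoundAt Bland mem Tap x r) (hx : ¬ Bland x) :
    ∃ w b, mem b r ∧ Tap w b x :=
  h.resolve_left fun h => hx h.1

theorem wsWevel.bland {s : M} (hs : wsWevel Bland mem Tap s) : Bland s := by
  obtain ⟨-, -, hsb, -⟩ := hs
  exact hsb

theorem wsWevel.wandTransitive {s : M} (hs : wsWevel Bland mem Tap s) :
    wsWandTransitive Bland mem Tap s := by
  obtain ⟨h, hh, -, hs⟩ := hs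
  have mem_s_of_mem_inter {a i y : M} (hah : mem a h) (hi : wsIsInter Bland mem a h i)
      (hy : wsFoundIn Bland mem Tap y i) : mem y s := by
    obtain ⟨r, hyr, hri⟩ := hy
    exact (hs y).2 ⟨r, hyr, ((hi.2 r).1 hri).2⟩
  intro x hx
  obtain ⟨a, hxa, hah⟩ := (hs x).1 hx
  obtain ⟨i, hi, -, ha⟩ := hh.2 a hah
  rcases hxa with ⟨hxb, hxa⟩ | ⟨w, b, hba, htap⟩
  · exact Or.inl ⟨hxb, fun y hy => mem_s_of_mem_inter hah hi ((ha y).1 (hxa y hy))⟩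
  · exact Or.inr ⟨w, b, mem_s_of_mem_inter hah hi ((ha b).1 hba), htap⟩

/-- A tap output has no members, so whatever is found at it is found anywhere. -/
theorem wsWevel.wandPotent (hInNB : ∀ x a, mem x a → Bland a)
    (hTapNB : ∀ w a c, Tap w a c → Wand w ∧ ¬ Bland c) {s : M}
    (hs : wsWevel Bland mem Tap s) : wsWandPotent Bland mem Tap s := by
  obtain ⟨h, -, -, hs⟩ := hs
  rintro x ⟨r, hxr, hrs⟩
  obtain ⟨a, hra, hah⟩ := (hs r).1 hrs
  rcases hra with ⟨-, hra⟩ | ⟨w, b, -, htap⟩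
  · exact (hs x).2 ⟨a, hxr.mono hra, hah⟩
  · have hr_empty : ∀ y, ¬ mem y r := fun y hy => (hTapNB w b r htap).2 (hInNB y r hy)
    rcases hxr with ⟨hx, hxr⟩ | ⟨-, b', hb'r, -⟩
    · exact (hs x).2 ⟨a, Or.inl ⟨hx, fun y hy => (hr_empty y (hxr y hy)).elim⟩, hah⟩
    · exact (hr_empty b' hb'r).elim

theorem wsWevel.sub_of_mem (hTapNB : ∀ w a c, Tap w a c → Wand w ∧ ¬ Bland c) {r s : M}
    (hs : wsWevel Bland mem Tap s) (hr : Bland r) (hrs : mem r s) : wsSub mem r s := by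
  rcases hs.wandTransitive r hrs with ⟨-, hrs⟩ | ⟨w, b, -, htap⟩
  · exact hrs
  · exact absurd hr (hTapNB w b r htap).2

theorem wsWevelsWellFounded.induction (hmin : wsWevelsWellFounded Bland mem Tap) (P : M → Prop)
    (step : ∀ s, wsWevel Bland mem Tap s → (∀ r, wsWevel Bland mem Tap r → mem r s → P r) → P s)
    {s : M} (hs : wsWevel Bland mem Tap s) : P s := by
  by_contra hPs
  obtain ⟨t, ht, hPt, hbelow⟩ := hmin (fun t => ¬ P t) ⟨s, hs, hPs⟩
  exact hPt (step t ht fun r hr hrt => not_not.1 (hbelow r hr hrt))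

theorem wsWevelsWellFounded.not_mem_self (hmin : wsWevelsWellFounded Bland mem Tap) {s : M}
    (hs : wsWevel Bland mem Tap s) : ¬ mem s s :=
  hmin.induction (fun s => ¬ mem s s) (fun s hs ih hss => ih s hs hss hss) hs

theorem wsWevel.sub_iff_not_mem (hTapNB : ∀ w a c, Tap w a c → Wand w ∧ ¬ Bland c)
    (htri : wsWevelsTrichotomous Bland mem Tap) (hmin : wsWevelsWellFounded Bland mem Tap)
    {r s : M} (hr : wsWevel Bland mem Tap r) (hs : wsWevel Bland mem Tap s) :
    wsSub mem r s ↔ ¬ mem s r := by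
  refine ⟨fun hrs hsr => hmin.not_mem_self hs (hrs s hsr), fun hsr => ?_⟩
  rcases htri r s hr hs with hrs | rfl | hsr'
  · exact hs.sub_of_mem hTapNB hr.bland hrs
  · exact fun y hy => hy
  · exact absurd hsr' hsr

theorem wsWevel.mem_iff_not_sub (hTapNB : ∀ w a c, Tap w a c → Wand w ∧ ¬ Bland c)
    (htri : wsWevelsTrichotomous Bland mem Tap) (hmin : wsWevelsWellFounded Bland mem Tap)
    {r s : M} (hr : wsWevel Bland mem Tap r) (hs : wsWevel Bland mem Tap s) :
    mem r s ↔ ¬ wsSub mem s r := by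
  rw [hs.sub_iff_not_mem hTapNB htri hmin hr, not_not]

theorem wsWevel.mem_of_sub_of_mem (hTapNB : ∀ w a c, Tap w a c → Wand w ∧ ¬ Bland c)
    (htri : wsWevelsTrichotomous Bland mem Tap) (hmin : wsWevelsWellFounded Bland mem Tap)
    {r s t : M} (hr : wsWevel Bland mem Tap r) (hs : wsWevel Bland mem Tap s)
    (ht : wsWevel Bland mem Tap t) (hrt : wsSub mem r t) (hts : mem t s) : mem r s :=
  (hr.mem_iff_not_sub hTapNB htri hmin hs).2 fun hsr =>
    (ht.mem_iff_not_sub hTapNB htri hmin hs).1 hts (hsr.trans hrt)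

theorem wsWevel.wistory_of_wevels_below (hInNB : ∀ x a, mem x a → Bland a)
    (hTapNB : ∀ w a c, Tap w a c → Wand w ∧ ¬ Bland c)
    (hSep : ∀ (φ : M → Prop) a, Bland a → ∃ b, Bland b ∧ ∀ x, mem x b ↔ (mem x a ∧ φ x))
    {s G : M} (hs : wsWevel Bland mem Tap s) (hGb : Bland G)
    (hG : ∀ r, mem r G ↔ mem r s ∧ wsWevel Bland mem Tap r)
    (ih : ∀ r, wsWevel Bland mem Tap r → mem r s →
      ∀ x, mem x r → wsFoundAtWevelIn Bland mem Tap x r) :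
    wsWistory Bland mem Tap G := by
  refine ⟨hGb, fun r hrG => ?_⟩
  obtain ⟨hrs, hr⟩ := (hG r).1 hrG
  obtain ⟨i, hib, hi⟩ := hSep (fun y => mem y G) r hr.bland
  refine ⟨i, ⟨hib, hi⟩, hr.bland, fun y => ⟨fun hyr => ?_, ?_⟩⟩
  · obtain ⟨r', hr', hr'r, hyr'⟩ := ih r hr hrs y hyr
    have hr'G : mem r' G := (hG r').2 ⟨hs.sub_of_mem hTapNB hr.bland hrs r' hr'r, hr'⟩
    exact ⟨r', hyr', (hi r').2 ⟨hr'r, hr'G⟩⟩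
  · rintro ⟨r', hyr', hr'i⟩
    exact hr.wandPotent hInNB hTapNB y ⟨r', hyr', ((hi r').1 hr'i).1⟩

theorem wsWevel.foundAtWevelIn_of_mem (hInNB : ∀ x a, mem x a → Bland a)
    (hTapNB : ∀ w a c, Tap w a c → Wand w ∧ ¬ Bland c)
    (hSep : ∀ (φ : M → Prop) a, Bland a → ∃ b, Bland b ∧ ∀ x, mem x b ↔ (mem x a ∧ φ x))
    (htri : wsWevelsTrichotomous Bland mem Tap) (hmin : wsWevelsWellFounded Bland mem Tap)
    {s x : M} (hs : wsWevel Bland mem Tap s) (hx : mem x s) :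
    wsFoundAtWevelIn Bland mem Tap x s := by
  refine hmin.induction (fun s => ∀ x, mem x s → wsFoundAtWevelIn Bland mem Tap x s)
    (fun s hs ih => ?_) hs x hx
  obtain ⟨G, hGb, hG⟩ := hSep (wsWevel Bland mem Tap) s hs.bland
  obtain ⟨t, htb, ht⟩ := hSep (fun y => wsFoundIn Bland mem Tap y G) s hs.bland
  have ht_cpot : wsIsCpot Bland mem Tap G t := by
    refine ⟨htb, fun y => (ht y).trans ⟨And.right, fun hy => ⟨?_, hy⟩⟩⟩
    obtain ⟨r, hyr, hrG⟩ := hy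
    exact hs.wandPotent hInNB hTapNB y ⟨r, hyr, ((hG r).1 hrG).1⟩
  have htw : wsWevel Bland mem Tap t :=
    ⟨G, hs.wistory_of_wevels_below hInNB hTapNB hSep hGb hG ih, ht_cpot⟩
  -- `t ∈ s` would put `t` in `G`, and `t` is found at itself, so `t ∈ t`.
  have ht_not_mem : ¬ mem t s := fun hts =>
    hmin.not_mem_self htw <| (ht_cpot.2 t).2 ⟨t, Or.inl ⟨htb, fun y hy => hy⟩, (hG t).2 ⟨hts, htw⟩⟩
  intro x hx
  have hst : wsSub mem s t := (hs.sub_iff_not_mem hTapNB htri hmin htw).2 ht_not_mem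
  obtain ⟨r, hxr, hrG⟩ := (ht_cpot.2 x).1 (hst x hx)
  exact ⟨r, ((hG r).1 hrG).2, ((hG r).1 hrG).1, hxr⟩

theorem exists_wsIsWevOf (hStrat : ∀ a, ∃ s, wsWevel Bland mem Tap s ∧ wsFoundAt Bland mem Tap a s)
    (hmin : wsWevelsWellFounded Bland mem Tap) (a : M) : ∃ s, wsIsWevOf Bland mem Tap a s := by
  obtain ⟨s, hs, has, hbelow⟩ := hmin (wsFoundAt Bland mem Tap a) (hStrat a)
  exact ⟨s, hs, has, fun r hr har hrs => hbelow r hr hrs har⟩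

theorem wsIsWevOf.sub (hTapNB : ∀ w a c, Tap w a c → Wand w ∧ ¬ Bland c)
    (htri : wsWevelsTrichotomous Bland mem Tap) (hmin : wsWevelsWellFounded Bland mem Tap)
    {a t s : M} (ht : wsIsWevOf Bland mem Tap a t) (hs : wsWevel Bland mem Tap s)
    (has : wsFoundAt Bland mem Tap a s) : wsSub mem t s :=
  (ht.1.sub_iff_not_mem hTapNB htri hmin hs).2 (ht.2.2 s hs has)

theorem wsIsWevOf.mem_of_mem (hInNB : ∀ x a, mem x a → Bland a)
    (hTapNB : ∀ w a c, Tap w a c → Wand w ∧ ¬ Bland c)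
    (hSep : ∀ (φ : M → Prop) a, Bland a → ∃ b, Bland b ∧ ∀ x, mem x b ↔ (mem x a ∧ φ x))
    (htri : wsWevelsTrichotomous Bland mem Tap) (hmin : wsWevelsWellFounded Bland mem Tap)
    {x s t : M} (ht : wsIsWevOf Bland mem Tap x t) (hs : wsWevel Bland mem Tap s)
    (hxs : mem x s) : mem t s := by
  obtain ⟨r, hr, hrs, hxr⟩ := hs.foundAtWevelIn_of_mem hInNB hTapNB hSep htri hmin hxs
  exact ht.1.mem_of_sub_of_mem hTapNB htri hmin hs hr (ht.sub hTapNB htri hmin hr hxr) hrs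

theorem exists_tap_wsIsWevOf_minimal (hTapNB : ∀ w a c, Tap w a c → Wand w ∧ ¬ Bland c)
    (hStrat : ∀ a, ∃ s, wsWevel Bland mem Tap s ∧ wsFoundAt Bland mem Tap a s)
    (htri : wsWevelsTrichotomous Bland mem Tap) (hmin : wsWevelsWellFounded Bland mem Tap)
    {c : M} (hc : ¬ Bland c) :
    ∃ w a sa, Tap w a c ∧ wsIsWevOf Bland mem Tap a sa ∧
      ∀ u b sb, Tap u b c → wsIsWevOf Bland mem Tap b sb → wsSub mem sa sb := by
  obtain ⟨s₀, -, hc₀⟩ := hStrat c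
  obtain ⟨w₀, b₀, -, htap₀⟩ := hc₀.exists_tap hc
  obtain ⟨t₀, ht₀⟩ := exists_wsIsWevOf hStrat hmin b₀
  obtain ⟨sa, hsa, ⟨w, a, htap, ha⟩, hbelow⟩ :=
    hmin (fun s => ∃ w a, Tap w a c ∧ wsIsWevOf Bland mem Tap a s) ⟨t₀, ht₀.1, w₀, b₀, htap₀, ht₀⟩
  exact ⟨w, a, sa, htap, ha, fun u b sb hub hb =>
    (hsa.sub_iff_not_mem hTapNB htri hmin hb.1).2 fun hsb => hbelow sb hb.1 hsb ⟨u, b, hub, hb⟩⟩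

theorem wsIsWevOf.not_mem_of_tap (hInNB : ∀ x a, mem x a → Bland a)
    (hTapNB : ∀ w a c, Tap w a c → Wand w ∧ ¬ Bland c) {w a c sa sc r : M}
    (hc : wsIsWevOf Bland mem Tap c sc) (htap : Tap w a c) (ha : wsIsWevOf Bland mem Tap a sa)
    (hr : wsWevel Bland mem Tap r) (hsar : mem sa r) : ¬ mem r sc :=
  hc.2.2 r hr (Or.inr ⟨w, a, hr.wandPotent hInNB hTapNB a ⟨sa, ha.2.1, hsar⟩, htap⟩)

end Wevels

theorem min_tap_exists_general {M : Type*} (Bland Wand : M → Prop) (mem : M → M → Prop)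
    (Tap : M → M → M → Prop)
    (hInNB : ∀ x a, mem x a → Bland a)
    (hTapNB : ∀ w a c, Tap w a c → Wand w ∧ ¬ Bland c)
    (hSep : ∀ (φ : M → Prop) a, Bland a → ∃ b, Bland b ∧ ∀ x, mem x b ↔ (mem x a ∧ φ x))
    (hStrat : ∀ a, ∃ s, wsWevel Bland mem Tap s ∧ wsFoundAt Bland mem Tap a s)
    (htri : ∀ r s, wsWevel Bland mem Tap r → wsWevel Bland mem Tap s →
      (mem r s ∨ r = s ∨ mem s r))
    (hmin : ∀ φ : M → Prop, (∃ s, wsWevel Bland mem Tap s ∧ φ s) →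
      ∃ s, wsWevel Bland mem Tap s ∧ φ s ∧
        ∀ r, wsWevel Bland mem Tap r → mem r s → ¬ φ r) :
    ∀ c, ¬ Bland c →
      ∃ w a sa, Tap w a c ∧ wsIsWevOf Bland mem Tap a sa ∧
        (∀ u b sb, Tap u b c → wsIsWevOf Bland mem Tap b sb → wsSub mem sa sb) ∧
        (∀ sc, wsIsWevOf Bland mem Tap c sc →
          mem sa sc ∧ ∀ r, wsWevel Bland mem Tap r → mem sa r → ¬ mem r sc) := by
  intro c hc
  obtain ⟨w, a, sa, htap, ha, ha_min⟩ := exists_tap_wsIsWevOf_minimal hTapNB hStrat htri hmin hc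
  refine ⟨w, a, sa, htap, ha, ha_min, fun sc hsc => ⟨?_, fun r hr hsar =>
    hsc.not_mem_of_tap hInNB hTapNB htap ha hr hsar⟩⟩
  obtain ⟨u, b, hbsc, hub⟩ := hsc.2.1.exists_tap hc
  obtain ⟨sb, hsb⟩ := exists_wsIsWevOf hStrat hmin b
  exact ha.1.mem_of_sub_of_mem hTapNB htri hmin hsc.1 hsb.1 (ha_min u b sb hub hsb)
    (hsb.mem_of_mem hInNB hTapNB hSep htri hmin hsc.1 hbsc)

/-- If c is not bland, there are w, a with Tap(w,a,c) of minimal rank among all taps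
yielding c; and then rank(a) + 1 = rank(c), expressed via wevels:  wev(a) ⊆ wev(b) for
all taps (u,b) of c, and wev(c) is the immediate successor wevel of wev(a). -/
theorem min_tap_exists {M : Type*} (Bland Wand : M → Prop) (mem : M → M → Prop)
    (Tap : M → M → M → Prop)
    (hInNB : ∀ x a, mem x a → Bland a)
    (hTapNB : ∀ w a c, Tap w a c → Wand w ∧ ¬ Bland c)
    (hExt : ∀ a b, Bland a → Bland b → (∀ x, mem x a ↔ mem x b) → a = b)
    (hSep : ∀ (φ : M → Prop) a, Bland a → ∃ b, Bland b ∧ ∀ x, mem x b ↔ (mem x a ∧ φ x))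
    (hStrat : ∀ a, ∃ s, wsWevel Bland mem Tap s ∧ wsFoundAt Bland mem Tap a s)
    (htri : ∀ r s, wsWevel Bland mem Tap r → wsWevel Bland mem Tap s →
      (mem r s ∨ r = s ∨ mem s r))
    (hmin : ∀ φ : M → Prop, (∃ s, wsWevel Bland mem Tap s ∧ φ s) →
      ∃ s, wsWevel Bland mem Tap s ∧ φ s ∧
        ∀ r, wsWevel Bland mem Tap r → mem r s → ¬ φ r) :
    ∀ c, ¬ Bland c →
      ∃ w a sa, Tap w a c ∧ wsIsWevOf Bland mem Tap a sa ∧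
        (∀ u b sb, Tap u b c → wsIsWevOf Bland mem Tap b sb → wsSub mem sa sb) ∧
        (∀ sc, wsIsWevOf Bland mem Tap c sc →
          mem sa sc ∧ ∀ r, wsWevel Bland mem Tap r → mem sa r → ¬ mem r sc) :=
  min_tap_exists_general Bland Wand mem Tap hInNB hTapNB hSep hStrat htri hmin
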